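/- arXiv:1912.05466 — 2 statements merged into one kernel-verified Lean document; each statement's English description precedes it below -/
import Mathlib

section
/- With h = 1/2, a = 1/3 and p, q, r ∈ (0,1/36), let S = {S1(x)=px, S2(x)=a+rx, S3(x)=h−qx, S4(x)=h−r+rx, S5(x)=1−a−rx, S6(x)=1−r+rx} with attractor K and pieces Ki = Si(K). Then K3 ∩ K4 = {h} if and only if for all m, n ≥ 0 and all i ∈ {1,…,5}, j ∈ {2,…,6}: S3 S1^m(Kj) ∩ S4 S6^n(Ki) = ∅. -/
open Set MeasureTheory

/-- The system `{px, a+rx, h−qx, h−r+rx, 1−a−rx, 1−r+rx}` with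
`h = 1/2`, `a = 1/3`. -/
noncomputable def sys6 (p q r : ℝ) : Fin 6 → ℝ → ℝ :=
  ![fun x => p * x, fun x => 1 / 3 + r * x, fun x => 1 / 2 - q * x,
    fun x => 1 / 2 - r + r * x, fun x => 1 - 1 / 3 - r * x,
    fun x => 1 - r + r * x]

private lemma sys6_iter0 (p q r : ℝ) (m : ℕ) (x : ℝ) :
    (sys6 p q r 0)^[m] x = p ^ m * x := by
  induction m with
  | zero => simp
  | succ m ih =>
      rw [Function.iterate_succ_apply', ih]
      show p * (p ^ m * x) = p ^ (m + 1) * x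
      ring

private lemma sys6_iter5 (p q r : ℝ) (n : ℕ) (x : ℝ) :
    (sys6 p q r 5)^[n] x = 1 - r ^ n * (1 - x) := by
  induction n with
  | zero => simp
  | succ n ih =>
      rw [Function.iterate_succ_apply', ih]
      show 1 - r + r * (1 - r ^ n * (1 - x)) = 1 - r ^ (n + 1) * (1 - x)
      ring

/-- `K₃ ∩ K₄ = {h}` iff all the sets `S₃S₁^m(K_j)` and `S₄S₆^n(K_i)`
(`j ≠ 1`, `i ≠ 6`, `m,n ≥ 0`) are disjoint.
Indices: `S₁,…,S₆` correspond to `0,…,5 : Fin 6`. -/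
theorem one_point_intersection_criterion (p q r : ℝ)
    (hp : p ∈ Ioo (0 : ℝ) (1 / 36)) (hq : q ∈ Ioo (0 : ℝ) (1 / 36))
    (hr : r ∈ Ioo (0 : ℝ) (1 / 36))
    (K : Set ℝ) (hKne : K.Nonempty) (hKc : IsCompact K) (hKsub : K ⊆ Icc 0 1)
    (hK : K = ⋃ i, sys6 p q r i '' K) :
    sys6 p q r 2 '' K ∩ sys6 p q r 3 '' K = {(1 / 2 : ℝ)} ↔
      ∀ (m n : ℕ) (i j : Fin 6), i ≠ 5 → j ≠ 0 →
        (sys6 p q r 2 ∘ (sys6 p q r 0)^[m]) '' (sys6 p q r j '' K) ∩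
          (sys6 p q r 3 ∘ (sys6 p q r 5)^[n]) '' (sys6 p q r i '' K) = ∅ := by
  obtain ⟨hp0, hp1⟩ := hp
  obtain ⟨hq0, hq1⟩ := hq
  obtain ⟨hr0, hr1⟩ := hr
  have hplt1 : p < 1 := by linarith
  have hrlt1 : r < 1 := by linarith
  -- pieces are inside K
  have himg : ∀ i : Fin 6, sys6 p q r i '' K ⊆ K := by
    intro i x hx
    rw [hK]
    exact mem_iUnion.2 ⟨i, hx⟩
  have hiter0K : ∀ (m : ℕ) (x : ℝ), x ∈ K → (sys6 p q r 0)^[m] x ∈ K := by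
    intro m
    induction m with
    | zero => intro x hx; simpa using hx
    | succ m ih =>
        intro x hx
        rw [Function.iterate_succ_apply']
        exact himg 0 (mem_image_of_mem _ (ih x hx))
  have hiter5K : ∀ (n : ℕ) (x : ℝ), x ∈ K → (sys6 p q r 5)^[n] x ∈ K := by
    intro n
    induction n with
    | zero => intro x hx; simpa using hx
    | succ n ih =>
        intro x hx
        rw [Function.iterate_succ_apply']
        exact himg 5 (mem_image_of_mem _ (ih x hx))
  -- 0 ∈ K and 1 ∈ K
  obtain ⟨x0, hx0⟩ := hKne
  have hx0m : ∀ m : ℕ, p ^ m * x0 ∈ K := by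
    intro m
    have := hiter0K m x0 hx0
    rwa [sys6_iter0] at this
  have h0K : (0 : ℝ) ∈ K := by
    have htend : Filter.Tendsto (fun m : ℕ => p ^ m * x0) Filter.atTop (nhds 0) := by
      have := (tendsto_pow_atTop_nhds_zero_of_lt_one hp0.le hplt1).mul_const x0
      simpa using this
    exact hKc.isClosed.mem_of_tendsto htend (Filter.Eventually.of_forall hx0m)
  have h1K : (1 : ℝ) ∈ K := by
    have hx1n : ∀ n : ℕ, 1 - r ^ n * (1 - x0) ∈ K := by
      intro n
      have := hiter5K n x0 hx0
      rwa [sys6_iter5] at this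
    have htend : Filter.Tendsto (fun n : ℕ => 1 - r ^ n * (1 - x0)) Filter.atTop (nhds 1) := by
      have h := ((tendsto_pow_atTop_nhds_zero_of_lt_one hr0.le hrlt1).mul_const (1 - x0)).const_sub 1
      simpa using h
    exact hKc.isClosed.mem_of_tendsto htend (Filter.Eventually.of_forall hx1n)
  -- key decompositions
  have key0 : ∀ m : ℕ, ∀ x ∈ K,
      (∃ (m' : ℕ) (j : Fin 6), j ≠ 0 ∧ x ∈ (sys6 p q r 0)^[m'] '' (sys6 p q r j '' K)) ∨
        x ≤ p ^ m := by
    intro m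
    induction m with
    | zero => intro x hx; right; simpa using (hKsub hx).2
    | succ m ih =>
        intro x hx
        rw [hK] at hx
        obtain ⟨i, hxi⟩ := mem_iUnion.1 hx
        by_cases hi0 : i = 0
        · subst hi0
          obtain ⟨x', hx', rfl⟩ := hxi
          rcases ih x' hx' with ⟨m', j, hj, hmem⟩ | hle
          · left
            refine ⟨m' + 1, j, hj, ?_⟩
            rw [Function.iterate_succ', Set.image_comp]
            exact mem_image_of_mem _ hmem
          · right
            have h0 : 0 ≤ x' := (hKsub hx').1
            show p * x' ≤ p ^ (m + 1)
            calc p * x' ≤ p * p ^ m := by nlinarith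
              _ = p ^ (m + 1) := by ring
        · left
          exact ⟨0, i, hi0, by simpa using hxi⟩
  have key5 : ∀ n : ℕ, ∀ x ∈ K,
      (∃ (n' : ℕ) (i : Fin 6), i ≠ 5 ∧ x ∈ (sys6 p q r 5)^[n'] '' (sys6 p q r i '' K)) ∨
        1 - x ≤ r ^ n := by
    intro n
    induction n with
    | zero => intro x hx; right; simpa using (hKsub hx).1
    | succ n ih =>
        intro x hx
        rw [hK] at hx
        obtain ⟨i, hxi⟩ := mem_iUnion.1 hx
        by_cases hi5 : i = 5
        · subst hi5
          obtain ⟨x', hx', rfl⟩ := hxi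
          rcases ih x' hx' with ⟨n', i', hi', hmem⟩ | hle
          · left
            refine ⟨n' + 1, i', hi', ?_⟩
            rw [Function.iterate_succ', Set.image_comp]
            exact mem_image_of_mem _ hmem
          · right
            have h1 : x' ≤ 1 := (hKsub hx').2
            show 1 - (1 - r + r * x') ≤ r ^ (n + 1)
            calc 1 - (1 - r + r * x') = r * (1 - x') := by ring
              _ ≤ r * r ^ n := by nlinarith
              _ = r ^ (n + 1) := by ring
        · left
          exact ⟨0, i, hi5, by simpa using hxi⟩
  -- positivity of the pieces other than K₁
  have hpos : ∀ (j : Fin 6), j ≠ 0 → ∀ u ∈ K, 0 < sys6 p q r j u := by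
    intro j hj u hu
    have h0 : 0 ≤ u := (hKsub hu).1
    have h1 : u ≤ 1 := (hKsub hu).2
    fin_cases j
    · exact absurd rfl hj
    · show 0 < 1 / 3 + r * u; nlinarith
    · show 0 < 1 / 2 - q * u; nlinarith
    · show 0 < 1 / 2 - r + r * u; nlinarith
    · show 0 < 1 - 1 / 3 - r * u; nlinarith
    · show 0 < 1 - r + r * u; nlinarith
  constructor
  · -- forward direction
    intro hsingle m n i j hi hj
    rw [eq_empty_iff_forall_notMem]
    rintro y ⟨hy1, hy2⟩
    obtain ⟨z, ⟨u, hu, rfl⟩, rfl⟩ := hy1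
    obtain ⟨w, ⟨v, hv, rfl⟩, heq⟩ := hy2
    set z := sys6 p q r j u with hz
    have hzK : z ∈ K := himg j (mem_image_of_mem _ hu)
    have hzpos : 0 < z := hpos j hj u hu
    have hyK3 : (sys6 p q r 2 ∘ (sys6 p q r 0)^[m]) z ∈ sys6 p q r 2 '' K :=
      mem_image_of_mem _ (hiter0K m z hzK)
    have hyK4 : (sys6 p q r 2 ∘ (sys6 p q r 0)^[m]) z ∈ sys6 p q r 3 '' K := by
      rw [← heq]
      exact mem_image_of_mem _ (hiter5K n _ (himg i (mem_image_of_mem _ hv)))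
    have hyhalf : (sys6 p q r 2 ∘ (sys6 p q r 0)^[m]) z = 1 / 2 := by
      have : (sys6 p q r 2 ∘ (sys6 p q r 0)^[m]) z ∈
          sys6 p q r 2 '' K ∩ sys6 p q r 3 '' K := ⟨hyK3, hyK4⟩
      rw [hsingle] at this
      exact this
    have hcomp : (sys6 p q r 2 ∘ (sys6 p q r 0)^[m]) z = 1 / 2 - q * (p ^ m * z) := by
      show sys6 p q r 2 ((sys6 p q r 0)^[m] z) = _
      rw [sys6_iter0]
      rfl
    rw [hcomp] at hyhalf
    have hpm : 0 < p ^ m := pow_pos hp0 m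
    nlinarith [mul_pos hq0 (mul_pos hpm hzpos)]
  · -- backward direction
    intro H
    apply Subset.antisymm
    · rintro y ⟨⟨x, hxK, rfl⟩, ⟨w, hwK, hw⟩⟩
      rw [mem_singleton_iff]
      by_contra hne
      -- first decomposition
      have hex0 : ∃ (m : ℕ) (j : Fin 6), j ≠ 0 ∧
          x ∈ (sys6 p q r 0)^[m] '' (sys6 p q r j '' K) := by
        by_contra hcon
        push_neg at hcon
        have hall : ∀ m : ℕ, x ≤ p ^ m := by
          intro m
          rcases key0 m x hxK with ⟨m', j, hj, hmem⟩ | hle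
          · exact absurd hmem (hcon m' j hj)
          · exact hle
        have hx0' : x ≤ 0 :=
          ge_of_tendsto (tendsto_pow_atTop_nhds_zero_of_lt_one hp0.le hplt1)
            (Filter.Eventually.of_forall hall)
        have hxeq : x = 0 := le_antisymm hx0' (hKsub hxK).1
        apply hne
        rw [hxeq]
        show 1 / 2 - q * 0 = 1 / 2
        ring
      have hex5 : ∃ (n : ℕ) (i : Fin 6), i ≠ 5 ∧
          w ∈ (sys6 p q r 5)^[n] '' (sys6 p q r i '' K) := by
        by_contra hcon
        push_neg at hcon
        have hall : ∀ n : ℕ, 1 - w ≤ r ^ n := by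
          intro n
          rcases key5 n w hwK with ⟨n', i, hi, hmem⟩ | hle
          · exact absurd hmem (hcon n' i hi)
          · exact hle
        have hw1 : 1 - w ≤ 0 :=
          ge_of_tendsto (tendsto_pow_atTop_nhds_zero_of_lt_one hr0.le hrlt1)
            (Filter.Eventually.of_forall hall)
        have hweq : w = 1 := le_antisymm (hKsub hwK).2 (by linarith)
        apply hne
        rw [← hw, hweq]
        show 1 / 2 - r + r * 1 = 1 / 2
        ring
      obtain ⟨m, j, hj, hmemx⟩ := hex0
      obtain ⟨n, i, hi, hmemw⟩ := hex5
      have h1 : sys6 p q r 2 x ∈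
          (sys6 p q r 2 ∘ (sys6 p q r 0)^[m]) '' (sys6 p q r j '' K) := by
        rw [Set.image_comp]
        exact mem_image_of_mem _ hmemx
      have h2 : sys6 p q r 2 x ∈
          (sys6 p q r 3 ∘ (sys6 p q r 5)^[n]) '' (sys6 p q r i '' K) := by
        rw [Set.image_comp, ← hw]
        exact mem_image_of_mem _ hmemw
      have := H m n i j hi hj
      rw [eq_empty_iff_forall_notMem] at this
      exact this _ ⟨h1, h2⟩
    · rw [singleton_subset_iff]
      refine ⟨⟨0, h0K, ?_⟩, ⟨1, h1K, ?_⟩⟩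
      · show 1 / 2 - q * 0 = 1 / 2; ring
      · show 1 / 2 - r + r * 1 = 1 / 2; ring
end

section
/- Let {S_t : t ∈ D} satisfy settings (S1)–(S4), let j, k be incomparable multiindices with constants c_j, C_k as in the main theorem, and set Φ(t, x, y) = S_{k,t}(π_t(x)) − S_{j,t}(π_t(y)) for addresses x, y ∈ I^∞. Then for all t, t' ∈ D and all x, y ∈ I^∞: ‖Φ(t',x,y) − Φ(t,x,y)‖ ≥ (c_j − C_k − C(r_j + r_k)/(1 − r̄))·‖t' − t‖. -/
open Set MeasureTheory

/-- `applyWord S t j` is the composition `S_{j,t} = S_{j₁,t} ∘ … ∘ S_{jₙ,t}`. -/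
def applyWord {n m : ℕ}
    (S : Fin m → EuclideanSpace ℝ (Fin n) →
      EuclideanSpace ℝ (Fin n) → EuclideanSpace ℝ (Fin n))
    (t : EuclideanSpace ℝ (Fin n)) :
    List (Fin m) → EuclideanSpace ℝ (Fin n) → EuclideanSpace ℝ (Fin n)
  | [] => id
  | i :: w => S i t ∘ applyWord S t w


lemma applyWord_mem' {n m : ℕ}
    (D : Set (EuclideanSpace ℝ (Fin n)))
    (S : Fin m → EuclideanSpace ℝ (Fin n) →
      EuclideanSpace ℝ (Fin n) → EuclideanSpace ℝ (Fin n))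
    (V : Set (EuclideanSpace ℝ (Fin n)))
    (hInv : ∀ k, ∀ t ∈ D, S k t '' V ⊆ V)
    (w : List (Fin m)) : ∀ t ∈ D, ∀ x ∈ V, applyWord S t w x ∈ V := by
  induction w with
  | nil => intro t ht x hx; exact hx
  | cons i w ih =>
      intro t ht x hx
      exact hInv i t ht ⟨_, ih t ht x hx, rfl⟩

lemma applyWord_lip' {n m : ℕ}
    (D : Set (EuclideanSpace ℝ (Fin n)))
    (S : Fin m → EuclideanSpace ℝ (Fin n) →
      EuclideanSpace ℝ (Fin n) → EuclideanSpace ℝ (Fin n))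
    (V : Set (EuclideanSpace ℝ (Fin n)))
    (hInv : ∀ k, ∀ t ∈ D, S k t '' V ⊆ V)
    (r : Fin m → ℝ) (hr0 : ∀ k, 0 < r k)
    (hLip : ∀ k, ∀ t ∈ D, ∀ x ∈ V, ∀ y ∈ V, ‖S k t x - S k t y‖ ≤ r k * ‖x - y‖)
    (w : List (Fin m)) : ∀ t ∈ D, ∀ x ∈ V, ∀ y ∈ V,
      ‖applyWord S t w x - applyWord S t w y‖ ≤ (w.map r).prod * ‖x - y‖ := by
  induction w with
  | nil => intro t ht x hx y hy; simp [applyWord]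
  | cons i w ih =>
      intro t ht x hx y hy
      have h1 := hLip i t ht _ (applyWord_mem' D S V hInv w t ht x hx)
        _ (applyWord_mem' D S V hInv w t ht y hy)
      have h2 := ih t ht x hx y hy
      calc ‖applyWord S t (i :: w) x - applyWord S t (i :: w) y‖
          ≤ r i * ‖applyWord S t w x - applyWord S t w y‖ := h1
        _ ≤ r i * ((w.map r).prod * ‖x - y‖) := by
            exact mul_le_mul_of_nonneg_left h2 (hr0 i).le
        _ = ((i :: w).map r).prod * ‖x - y‖ := by simp [mul_assoc]

lemma pi_disp' {n m : ℕ}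
    (D : Set (EuclideanSpace ℝ (Fin n)))
    (S : Fin m → EuclideanSpace ℝ (Fin n) →
      EuclideanSpace ℝ (Fin n) → EuclideanSpace ℝ (Fin n))
    (V : Set (EuclideanSpace ℝ (Fin n))) (hVc : IsCompact V)
    (r : Fin m → ℝ) (rbar C : ℝ)
    (hrbar0 : 0 ≤ rbar) (hrbar : ∀ k, r k ≤ rbar) (hrbar1 : rbar < 1)
    (hLip : ∀ k, ∀ t ∈ D, ∀ x ∈ V, ∀ y ∈ V, ‖S k t x - S k t y‖ ≤ r k * ‖x - y‖)
    (hC : 0 < C)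
    (hS4 : ∀ k, ∀ x ∈ V, ∀ t ∈ D, ∀ t' ∈ D, ‖S k t' x - S k t x‖ ≤ C * ‖t' - t‖)
    (π : EuclideanSpace ℝ (Fin n) → (ℕ → Fin m) → EuclideanSpace ℝ (Fin n))
    (hπV : ∀ t ∈ D, ∀ α, π t α ∈ V)
    (hπ : ∀ t ∈ D, ∀ α, π t α = S (α 0) t (π t fun i => α (i + 1))) :
    ∀ t ∈ D, ∀ t' ∈ D, ∀ α, ‖π t' α - π t α‖ ≤ C * ‖t' - t‖ / (1 - rbar) := by
  intro t ht t' ht' α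
  obtain ⟨M, hM⟩ := Metric.isBounded_iff.1 hVc.isBounded
  have hM0 : 0 ≤ M := by
    rcases (hπV t ht α) with hv
    have := hM hv hv
    simpa using this
  have key : ∀ N : ℕ, ∀ α : ℕ → Fin m,
      ‖π t' α - π t α‖ ≤ rbar ^ N * M + C * ‖t' - t‖ * ∑ i ∈ Finset.range N, rbar ^ i := by
    intro N
    induction N with
    | zero =>
        intro α
        have := hM (hπV t' ht' α) (hπV t ht α)
        rw [dist_eq_norm] at this
        simpa using this
    | succ N ih =>
        intro α
        set β : ℕ → Fin m := fun i => α (i + 1)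
        have e1 : π t α = S (α 0) t (π t β) := hπ t ht α
        have e2 : π t' α = S (α 0) t' (π t' β) := hπ t' ht' α
        have hb : π t β ∈ V := hπV t ht β
        have hb' : π t' β ∈ V := hπV t' ht' β
        have tri : ‖π t' α - π t α‖ ≤
            ‖S (α 0) t' (π t' β) - S (α 0) t' (π t β)‖ +
            ‖S (α 0) t' (π t β) - S (α 0) t (π t β)‖ := by
          rw [e1, e2]
          exact norm_sub_le_norm_sub_add_norm_sub _ _ _
        have h1 : ‖S (α 0) t' (π t' β) - S (α 0) t' (π t β)‖ ≤
            rbar * ‖π t' β - π t β‖ := by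
          refine le_trans (hLip (α 0) t' ht' _ hb' _ hb) ?_
          exact mul_le_mul_of_nonneg_right (hrbar _) (norm_nonneg _)
        have h2 : ‖S (α 0) t' (π t β) - S (α 0) t (π t β)‖ ≤ C * ‖t' - t‖ :=
          hS4 (α 0) _ hb t ht t' ht'
        have h3 : rbar * ‖π t' β - π t β‖ ≤
            rbar * (rbar ^ N * M + C * ‖t' - t‖ * ∑ i ∈ Finset.range N, rbar ^ i) :=
          mul_le_mul_of_nonneg_left (ih β) hrbar0
        have hsum : ∑ i ∈ Finset.range (N + 1), rbar ^ i
            = rbar * ∑ i ∈ Finset.range N, rbar ^ i + 1 := by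
          rw [geom_sum_succ]
        calc ‖π t' α - π t α‖
            ≤ rbar * ‖π t' β - π t β‖ + C * ‖t' - t‖ := by linarith
          _ ≤ rbar * (rbar ^ N * M + C * ‖t' - t‖ * ∑ i ∈ Finset.range N, rbar ^ i)
              + C * ‖t' - t‖ := by linarith
          _ = rbar ^ (N + 1) * M
              + C * ‖t' - t‖ * ∑ i ∈ Finset.range (N + 1), rbar ^ i := by
              rw [hsum]; ring
  have hub : ∀ N : ℕ, ‖π t' α - π t α‖ ≤ rbar ^ N * M + C * ‖t' - t‖ / (1 - rbar) := by
    intro N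
    refine le_trans (key N α) ?_
    have hsle : ∑ i ∈ Finset.range N, rbar ^ i ≤ 1 / (1 - rbar) := by
      have hne : rbar ≠ 1 := ne_of_lt hrbar1
      rw [geom_sum_eq hne]
      have he : (rbar ^ N - 1) / (rbar - 1) = (1 - rbar ^ N) / (1 - rbar) := by
        rw [← neg_div_neg_eq]; ring_nf
      rw [he]
      have hp : (0:ℝ) ≤ rbar ^ N := pow_nonneg hrbar0 N
      gcongr
      · linarith
    have hCΔ : 0 ≤ C * ‖t' - t‖ := mul_nonneg hC.le (norm_nonneg _)
    have := mul_le_mul_of_nonneg_left hsle hCΔ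
    calc rbar ^ N * M + C * ‖t' - t‖ * ∑ i ∈ Finset.range N, rbar ^ i
        ≤ rbar ^ N * M + C * ‖t' - t‖ * (1 / (1 - rbar)) := by linarith
      _ = rbar ^ N * M + C * ‖t' - t‖ / (1 - rbar) := by ring
  have hlim : Filter.Tendsto (fun N : ℕ => rbar ^ N * M + C * ‖t' - t‖ / (1 - rbar))
      Filter.atTop (nhds (0 * M + C * ‖t' - t‖ / (1 - rbar))) := by
    exact ((tendsto_pow_atTop_nhds_zero_of_lt_one hrbar0 hrbar1).mul_const M).add_const _
  have := le_of_tendsto_of_tendsto' tendsto_const_nhds hlim hub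
  simpa using this

/-- The key transversality estimate: with
`Φ(t,x,y) = S_{k,t}(π_t(x)) − S_{j,t}(π_t(y))`,
`‖Φ(t',x,y) − Φ(t,x,y)‖ ≥ (c_j − C_k − C(r_j + r_k)/(1 − r̄))‖t' − t‖`. -/
theorem transversality_estimate {n m : ℕ}
    (D : Set (EuclideanSpace ℝ (Fin n)))
    (S : Fin m → EuclideanSpace ℝ (Fin n) →
      EuclideanSpace ℝ (Fin n) → EuclideanSpace ℝ (Fin n))
    (V : Set (EuclideanSpace ℝ (Fin n))) (hVc : IsCompact V) (hVne : V.Nonempty)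
    (hInv : ∀ k, ∀ t ∈ D, S k t '' V ⊆ V)
    (r : Fin m → ℝ) (rbar C : ℝ)
    (hr0 : ∀ k, 0 < r k) (hrbar : ∀ k, r k ≤ rbar) (hrbar1 : rbar < 1)
    (hLip : ∀ k, ∀ t ∈ D, ∀ x ∈ V, ∀ y ∈ V, ‖S k t x - S k t y‖ ≤ r k * ‖x - y‖)
    (hC : 0 < C)
    (hS4 : ∀ k, ∀ x ∈ V, ∀ t ∈ D, ∀ t' ∈ D, ‖S k t' x - S k t x‖ ≤ C * ‖t' - t‖)
    (π : EuclideanSpace ℝ (Fin n) → (ℕ → Fin m) → EuclideanSpace ℝ (Fin n))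
    (hπV : ∀ t ∈ D, ∀ α, π t α ∈ V)
    (hπ : ∀ t ∈ D, ∀ α, π t α = S (α 0) t (π t fun i => α (i + 1)))
    (j k : List (Fin m)) (hjk : ¬ j <+: k ∧ ¬ k <+: j)
    (cj Ck : ℝ) (hcj : 0 < cj) (hCk : 0 < Ck)
    (hkLip : ∀ x ∈ V, ∀ t ∈ D, ∀ t' ∈ D,
      ‖applyWord S t' k x - applyWord S t k x‖ ≤ Ck * ‖t' - t‖)
    (hjLow : ∀ x ∈ V, ∀ t ∈ D, ∀ t' ∈ D,
      ‖applyWord S t' j x - applyWord S t j x‖ ≥ cj * ‖t' - t‖) :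
    ∀ t ∈ D, ∀ t' ∈ D, ∀ x y : ℕ → Fin m,
      ‖(applyWord S t' k (π t' x) - applyWord S t' j (π t' y)) -
        (applyWord S t k (π t x) - applyWord S t j (π t y))‖ ≥
      (cj - Ck - C * ((j.map r).prod + (k.map r).prod) / (1 - rbar)) *
        ‖t' - t‖ := by
  intro t ht t' ht' x y
  have hrbar0 : 0 ≤ rbar := le_trans (hr0 (x 0)).le (hrbar (x 0))
  have hpd := pi_disp' D S V hVc r rbar C hrbar0 hrbar hrbar1 hLip hC hS4 π hπV hπ
  set A := C * ‖t' - t‖ / (1 - rbar) with hAdef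
  have hAx : ‖π t' x - π t x‖ ≤ A := hpd t ht t' ht' x
  have hAy : ‖π t' y - π t y‖ ≤ A := hpd t ht t' ht' y
  set rj := (j.map r).prod with hrjdef
  set rk := (k.map r).prod with hrkdef
  have hrj0 : 0 ≤ rj := List.prod_nonneg (by
    intro a ha; obtain ⟨b, _, rfl⟩ := List.mem_map.1 ha; exact (hr0 b).le)
  have hrk0 : 0 ≤ rk := List.prod_nonneg (by
    intro a ha; obtain ⟨b, _, rfl⟩ := List.mem_map.1 ha; exact (hr0 b).le)
  have hpx : π t x ∈ V := hπV t ht x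
  have hpx' : π t' x ∈ V := hπV t' ht' x
  have hpy : π t y ∈ V := hπV t ht y
  have hpy' : π t' y ∈ V := hπV t' ht' y
  -- upper bound on the k-part
  have hK : ‖applyWord S t' k (π t' x) - applyWord S t k (π t x)‖ ≤ Ck * ‖t' - t‖ + rk * A := by
    have h1 : ‖applyWord S t' k (π t' x) - applyWord S t' k (π t x)‖ ≤ rk * A := by
      refine le_trans (applyWord_lip' D S V hInv r hr0 hLip k t' ht' _ hpx' _ hpx) ?_
      exact mul_le_mul_of_nonneg_left hAx hrk0
    have h2 : ‖applyWord S t' k (π t x) - applyWord S t k (π t x)‖ ≤ Ck * ‖t' - t‖ :=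
      hkLip _ hpx t ht t' ht'
    have tri := norm_sub_le_norm_sub_add_norm_sub (applyWord S t' k (π t' x))
      (applyWord S t' k (π t x)) (applyWord S t k (π t x))
    linarith
  -- lower bound on the j-part
  have hJ : ‖applyWord S t' j (π t' y) - applyWord S t j (π t y)‖ ≥ cj * ‖t' - t‖ - rj * A := by
    have h1 : ‖applyWord S t' j (π t' y) - applyWord S t' j (π t y)‖ ≤ rj * A := by
      refine le_trans (applyWord_lip' D S V hInv r hr0 hLip j t' ht' _ hpy' _ hpy) ?_
      exact mul_le_mul_of_nonneg_left hAy hrj0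
    have h2 : ‖applyWord S t' j (π t y) - applyWord S t j (π t y)‖ ≥ cj * ‖t' - t‖ :=
      hjLow _ hpy t ht t' ht'
    have tri := norm_sub_le_norm_sub_add_norm_sub (applyWord S t' j (π t y))
      (applyWord S t' j (π t' y)) (applyWord S t j (π t y))
    have hrev : ‖applyWord S t' j (π t y) - applyWord S t' j (π t' y)‖
        = ‖applyWord S t' j (π t' y) - applyWord S t' j (π t y)‖ := norm_sub_rev _ _
    linarith [hrev ▸ tri]
  -- combine
  have hrw : (applyWord S t' k (π t' x) - applyWord S t' j (π t' y)) -
      (applyWord S t k (π t x) - applyWord S t j (π t y)) =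
      (applyWord S t' k (π t' x) - applyWord S t k (π t x)) -
      (applyWord S t' j (π t' y) - applyWord S t j (π t y)) := by abel
  have hlow : ‖(applyWord S t' k (π t' x) - applyWord S t' j (π t' y)) -
      (applyWord S t k (π t x) - applyWord S t j (π t y))‖ ≥
      ‖applyWord S t' j (π t' y) - applyWord S t j (π t y)‖ -
      ‖applyWord S t' k (π t' x) - applyWord S t k (π t x)‖ := by
    rw [hrw]
    have := norm_sub_norm_le (applyWord S t' j (π t' y) - applyWord S t j (π t y))
      (applyWord S t' k (π t' x) - applyWord S t k (π t x))
    have hrev := norm_sub_rev (applyWord S t' j (π t' y) - applyWord S t j (π t y))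
      (applyWord S t' k (π t' x) - applyWord S t k (π t x))
    linarith
  have halg : rj * A + rk * A = C * (rj + rk) / (1 - rbar) * ‖t' - t‖ := by
    rw [hAdef]; field_simp
  have : (cj - Ck - C * (rj + rk) / (1 - rbar)) * ‖t' - t‖
      = cj * ‖t' - t‖ - Ck * ‖t' - t‖ - C * (rj + rk) / (1 - rbar) * ‖t' - t‖ := by ring
  linarith
end
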